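/- arXiv:2605.31317 — 3 statements merged into one kernel-verified Lean document; each statement's English description precedes it below -/
import Mathlib

section
/- Under the gradient-ascent dynamics θ_{t+1} = θ_t + 2η x_f (x_f^T θ_t - y_f), the residual on any query point x_q satisfies r_T^{(q)} = r_0^{(q)} + (⟨x_q, x_f⟩/⟨x_f, x_f⟩)·((1 + 2η‖x_f‖²)^T - 1)·r_0^{(f)}, where r_t^{(q)} = x_q^T θ_t - y_q and r_t^{(f)} = x_f^T θ_t - y_f. -/
open Matrix

/-- Gradient-ascent residual on a query point. -/
theorem stmt_1 (d : ℕ) (xf xq : Fin d → ℝ) (hxf : xf ≠ 0) (yf yq : ℝ)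
    (η : ℝ) (hη : 0 < η) (θ : ℕ → Fin d → ℝ)
    (hθ : ∀ t, θ (t + 1) = θ t + (2 * η * (xf ⬝ᵥ θ t - yf)) • xf)
    (rq rf : ℕ → ℝ)
    (hrq : ∀ t, rq t = xq ⬝ᵥ θ t - yq)
    (hrf : ∀ t, rf t = xf ⬝ᵥ θ t - yf) :
    ∀ T, rq T = rq 0 +
      (xq ⬝ᵥ xf) / (xf ⬝ᵥ xf) * ((1 + 2 * η * (xf ⬝ᵥ xf)) ^ T - 1) * rf 0 := by
  have hne : (xf ⬝ᵥ xf) ≠ 0 := fun h => hxf (dotProduct_self_eq_zero.mp h)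
  have hfstep : ∀ t, rf (t + 1) = (1 + 2 * η * (xf ⬝ᵥ xf)) * rf t := by
    intro t
    rw [hrf (t+1), hθ, dotProduct_add, dotProduct_smul, smul_eq_mul]
    linear_combination (-(1 + 2 * η * (xf ⬝ᵥ xf))) * hrf t
  have hfpow : ∀ t, rf t = (1 + 2 * η * (xf ⬝ᵥ xf)) ^ t * rf 0 := by
    intro t
    induction t with
    | zero => simp
    | succ n ih => rw [hfstep, ih, pow_succ]; ring
  have hqstep : ∀ t, rq (t + 1) = rq t + 2 * η * rf t * (xq ⬝ᵥ xf) := by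
    intro t
    rw [hrq (t+1), hθ, dotProduct_add, dotProduct_smul, smul_eq_mul]
    linear_combination (-1) * hrq t + (-(2 * η * (xq ⬝ᵥ xf))) * hrf t
  intro T
  induction T with
  | zero => simp
  | succ n ih =>
      rw [hqstep, ih, hfpow n, pow_succ]
      field_simp
      ring
end

section
/- Let θ_T denote T steps of the update θ_{t+1} = (1-η_t λ)θ_t - η_t X_F^T g_t for arbitrary vectors g_t ∈ ℝ^m, starting from θ_0. Then for any x_q ∈ ℝ^d, writing Γ = Π_{t=0}^{T-1}(1-η_t λ), z_t^{(q)} = ⟨θ_t, x_q⟩, z_t^{(F)} = X_F θ_t, and α_q = (X_F X_F^T)^{-1} X_F x_q (assuming X_F X_F^T invertible), it holds that ⟨θ_T, x_q⟩ = Γ·z_0^{(q)} + α_q^T (z_T^{(F)} - Γ·z_0^{(F)}). -/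
open Matrix

/-- Unrolled logit identity for random-label dynamics. -/
theorem stmt_3 (m d : ℕ) (XF : Matrix (Fin m) (Fin d) ℝ)
    (hG : IsUnit (XF * XFᵀ).det) (lam : ℝ) (hlam : 0 ≤ lam)
    (η : ℕ → ℝ) (hη : ∀ t, 0 < η t) (g : ℕ → Fin m → ℝ)
    (θ : ℕ → Fin d → ℝ)
    (hθ : ∀ t, θ (t + 1) = (1 - η t * lam) • θ t - (η t) • (XFᵀ *ᵥ g t))
    (xq : Fin d → ℝ) (T : ℕ)
    (Γ : ℝ) (hΓ : Γ = ∏ t ∈ Finset.range T, (1 - η t * lam))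
    (αq : Fin m → ℝ) (hα : αq = (XF * XFᵀ)⁻¹ *ᵥ (XF *ᵥ xq)) :
    θ T ⬝ᵥ xq = Γ * (θ 0 ⬝ᵥ xq) +
      αq ⬝ᵥ (XF *ᵥ θ T - Γ • (XF *ᵥ θ 0)) := by
  -- θ T = Γ • θ 0 + XFᵀ *ᵥ v for some v
  have key : ∀ S : ℕ, ∃ v : Fin m → ℝ,
      θ S = (∏ t ∈ Finset.range S, (1 - η t * lam)) • θ 0 + XFᵀ *ᵥ v := by
    intro S
    induction S with
    | zero => exact ⟨0, by simp⟩
    | succ n ih =>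
        obtain ⟨v, hv⟩ := ih
        refine ⟨(1 - η n * lam) • v - (η n) • g n, ?_⟩
        rw [hθ n, hv, Finset.prod_range_succ]
        rw [Matrix.mulVec_sub, Matrix.mulVec_smul, Matrix.mulVec_smul]
        ext i
        simp [mul_comm]
        ring
  obtain ⟨v, hv⟩ := key T
  rw [← hΓ] at hv
  have hGinv : (XF * XFᵀ) * (XF * XFᵀ)⁻¹ = 1 := Matrix.mul_nonsing_inv _ hG
  have hsym : (XF * XFᵀ)ᵀ = XF * XFᵀ := by simp [Matrix.transpose_mul]
  -- compute the correction term
  have h1 : XF *ᵥ θ T - Γ • (XF *ᵥ θ 0) = (XF * XFᵀ) *ᵥ v := by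
    rw [hv, Matrix.mulVec_add, Matrix.mulVec_smul, Matrix.mulVec_mulVec]
    abel
  rw [h1, hα]
  have h2 : ((XF * XFᵀ)⁻¹ *ᵥ (XF *ᵥ xq)) ⬝ᵥ ((XF * XFᵀ) *ᵥ v)
      = (XF *ᵥ xq) ⬝ᵥ v := by
    rw [Matrix.dotProduct_mulVec, ← Matrix.mulVec_transpose, hsym,
      Matrix.mulVec_mulVec, hGinv, Matrix.one_mulVec]
  rw [h2, hv]
  have h3 : (XFᵀ *ᵥ v) ⬝ᵥ xq = (XF *ᵥ xq) ⬝ᵥ v := by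
    rw [dotProduct_comm, Matrix.dotProduct_mulVec, Matrix.vecMul_transpose]
  rw [add_dotProduct, smul_dotProduct, h3, smul_eq_mul]
end

section
/- Single-point support deviation identity: under the decomposition x_q = α_{q,F} x_f + X_R^T α_{q,R} (projection of x_q onto span{x_f} ∪ rows of X_R), with the teacher logit on x_f equal to ⟨θ_full, P_{x_s} x_f⟩, teacher-preserved logits X_R θ_full on R, and θ_retrain = P_R θ_full the orthogonal projection of θ_full onto the row span of X_R, the deviation satisfies |⟨θ_unlearn, x_q⟩ - ⟨θ_retrain, x_q⟩| = |α_{q,F} · ⟨θ_retrain, P_{x_s}x_f - x_f⟩|, where ⟨θ_unlearn, x_q⟩ := α_{q,F}⟨θ_full, P_{x_s}x_f⟩ + α_{q,R}^T X_R θ_full and x_s is a row of X_R. -/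
open RealInnerProductSpace

/-- Single-point support deviation identity for local teacher distillation. -/
theorem stmt_16 (d k : ℕ) (xf : EuclideanSpace ℝ (Fin d))
    (xR : Fin k → EuclideanSpace ℝ (Fin d))
    (s : Fin k) (xs : EuclideanSpace ℝ (Fin d)) (hxs : xs = xR s)
    (hxs0 : xs ≠ 0)
    (θfull : EuclideanSpace ℝ (Fin d))
    (K : Submodule ℝ (EuclideanSpace ℝ (Fin d)))
    (hK : K = Submodule.span ℝ (Set.range xR))
    (θretrain : EuclideanSpace ℝ (Fin d))
    (hret : θretrain = (Submodule.orthogonalProjectionOnto K θfull : EuclideanSpace ℝ (Fin d)))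
    (Pxs : EuclideanSpace ℝ (Fin d) → EuclideanSpace ℝ (Fin d))
    (hP : ∀ v, Pxs v = (⟪v, xs⟫ / ‖xs‖ ^ 2) • xs)
    (αF : ℝ) (αR : Fin k → ℝ) (xq : EuclideanSpace ℝ (Fin d))
    (hxq : xq = αF • xf + ∑ i, αR i • xR i)
    (u : ℝ)
    (hu : u = αF * ⟪θfull, Pxs xf⟫ + ∑ i, αR i * ⟪θfull, xR i⟫) :
    |u - ⟪θretrain, xq⟫| = |αF * ⟪θretrain, Pxs xf - xf⟫| := by
  have hkey : ∀ v ∈ K, ⟪θretrain, v⟫ = ⟪θfull, v⟫ := by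
    intro v hv
    have h : θfull - θretrain ∈ Kᗮ := by
      rw [hret]; exact K.sub_starProjection_mem_orthogonal θfull
    have h0 : ⟪v, θfull - θretrain⟫ = (0:ℝ) :=
      (Submodule.mem_orthogonal K _).mp h v hv
    have := real_inner_comm v (θfull - θretrain)
    rw [inner_sub_right] at h0
    linarith [real_inner_comm v θfull, real_inner_comm v θretrain]
  have hmemR : ∀ i, xR i ∈ K := by
    intro i; rw [hK]; exact Submodule.subset_span ⟨i, rfl⟩
  have hmemP : Pxs xf ∈ K := by
    rw [hP]; exact Submodule.smul_mem K _ (hxs ▸ hmemR s)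
  have h1 : ⟪θretrain, Pxs xf⟫ = ⟪θfull, Pxs xf⟫ := hkey _ hmemP
  have h2 : ∀ i, ⟪θretrain, xR i⟫ = ⟪θfull, xR i⟫ := fun i => hkey _ (hmemR i)
  have hq : ⟪θretrain, xq⟫ = αF * ⟪θretrain, xf⟫ + ∑ i, αR i * ⟪θretrain, xR i⟫ := by
    rw [hxq, inner_add_right, real_inner_smul_right, inner_sum]
    simp [real_inner_smul_right, Finset.mul_sum, mul_left_comm]
  rw [hu, hq, inner_sub_right, h1]
  have : ∑ i, αR i * ⟪θfull, xR i⟫ = ∑ i, αR i * ⟪θretrain, xR i⟫ := by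
    simp [h2]
  rw [this]; ring_nf
end
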